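/- arXiv:2605.01606 — 2 statements merged into one kernel-verified Lean document; each statement's English description precedes it below -/
import Mathlib

section
/- Under perfect ranking with F continuous, set q_r(t) = IB_{r,k-r+1}(t) for t ∈ [0,1]. Then for each i ∈ {1,…,n} and each y ∈ ℝ, the CDF of the i-th pooled order statistic satisfies G_i(y) := P(Y*_{(i)} ≤ y) = ∑_{j=i}^n c_j(F(y)), where c_j(t) denotes the coefficient of z^j in the polynomial P(z;t) = ∏_{r=1}^k ((1 − q_r(t)) + q_r(t) z)^m. -/
/-!
`Y*_(i) ≤ y` exactly when at least `i` of the `n` observations are `≤ y`. The events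
`{Y_{r,j} ≤ y}` are independent with probabilities `q_r(F y)`, so the number of them that occur
is Poisson-binomial: expanding `∏ ((1 - p) + p z)` over subsets shows that the probability of
exactly `j` occurrences is the coefficient of `z ^ j`. Summing over `j ≥ i` gives the formula.
-/

open MeasureTheory ProbabilityTheory Filter Polynomial

/-- The beta function `B(a,b) = ∫₀¹ u^(a-1) (1-u)^(b-1) du`. -/
noncomputable def betaFun (a b : ℝ) : ℝ :=
  ∫ u in (0:ℝ)..1, u ^ (a - 1) * (1 - u) ^ (b - 1)

/-- The regularized incomplete beta function `IB_{a,b}(t)`. -/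
noncomputable def IB (a b t : ℝ) : ℝ :=
  (∫ u in (0:ℝ)..t, u ^ (a - 1) * (1 - u) ^ (b - 1)) / betaFun a b

/-- The `i`-th order statistic (1-based) of the pooled values `fun idx => Y idx ω`. -/
noncomputable def orderStat {Ω ι : Type*} [Fintype ι] (Y : ι → Ω → ℝ) (i : ℕ) (ω : Ω) : ℝ :=
  ((Finset.univ.val.map fun idx => Y idx ω).sort (· ≤ ·)).getD (i - 1) 0

open Finset

theorem List.SortedLE.getElem_le_iff_lt_countP {α : Type*} [LinearOrder α] {l : List α}
    (hl : l.SortedLE) {j : ℕ} (hj : j < l.length) (y : α) :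
    l[j] ≤ y ↔ j < l.countP (· ≤ y) := by
  constructor
  · intro hjy
    have hprefix : ∀ a ∈ l.take (j + 1), a ≤ y := by
      intro a ha
      obtain ⟨t, ht, rfl⟩ := List.getElem_of_mem ha
      rw [List.getElem_take]
      exact (hl.getElem_le_getElem_of_le (by simp at ht; omega)).trans hjy
    have hle := (List.take_sublist (j + 1) l).countP_le (p := fun a => decide (a ≤ y))
    rw [List.countP_eq_length.2 (by simpa using hprefix), List.length_take] at hle
    omega
  · intro hjc
    by_contra! hyj
    have hsuffix : (l.drop j).countP (· ≤ y) = 0 := List.countP_eq_zero.2 fun a ha => by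
      obtain ⟨t, ht, rfl⟩ := List.getElem_of_mem ha
      rw [List.getElem_drop]
      simpa using hyj.trans_le (hl.getElem_le_getElem_of_le (by omega))
    have hprefix := List.countP_le_length (l := l.take j) (p := fun a => decide (a ≤ y))
    rw [← List.take_append_drop j l, List.countP_append, hsuffix] at hjc
    simp only [List.length_take] at hprefix
    omega

theorem Multiset.sort_getD_pred_le_iff {α : Type*} [LinearOrder α] (s : Multiset α) {i : ℕ}
    (hi : 1 ≤ i) (hin : i ≤ s.card) (d y : α) :
    (s.sort (· ≤ ·)).getD (i - 1) d ≤ y ↔ i ≤ s.countP (· ≤ y) := by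
  have hlt : i - 1 < (s.sort (· ≤ ·)).length := by rw [Multiset.length_sort]; omega
  rw [List.getD_eq_getElem _ _ hlt,
    (Multiset.pairwise_sort s _).sortedLE.getElem_le_iff_lt_countP hlt,
    ← Multiset.coe_countP, Multiset.sort_eq]
  omega

theorem orderStat_le_iff {Ω ι : Type*} [Fintype ι] (Y : ι → Ω → ℝ) {i : ℕ} (hi : 1 ≤ i)
    (hin : i ≤ Fintype.card ι) (ω : Ω) (y : ℝ) :
    orderStat Y i ω ≤ y ↔ i ≤ #{idx | Y idx ω ≤ y} := by
  rw [orderStat, Multiset.sort_getD_pred_le_iff _ hi (by simpa using hin), Multiset.countP_map]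
  rfl

theorem Polynomial.coeff_prod_C_add_C_mul_X {R ι : Type*} [CommSemiring R] [Fintype ι]
    [DecidableEq ι] (a b : ι → R) (j : ℕ) :
    (∏ i, (C (a i) + C (b i) * X)).coeff j
      = ∑ S ∈ powersetCard j univ, ∏ i, if i ∈ S then b i else a i := by
  simp_rw [add_comm (C _), prod_add, finsetSum_coeff, prod_mul_distrib, prod_const, ← map_prod]
  rw [powersetCard_eq_filter, sum_filter]
  refine sum_congr rfl fun S _ => ?_
  rw [mul_right_comm, ← map_mul, coeff_C_mul_X_pow, ← compl_eq_univ_sdiff]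
  simp only [eq_comm (a := j)]
  split_ifs
  · rw [← prod_mul_prod_compl S]
    congr 1 <;> refine prod_congr rfl fun i hi => ?_ <;> simp_all
  · rfl

theorem ProbabilityTheory.iIndepFun.iIndepSet_preimage {Ω ι : Type*} [MeasurableSpace Ω]
    {P : Measure Ω} {β : ι → Type*} [∀ i, MeasurableSpace (β i)] {X : ∀ i, Ω → β i}
    (hX : iIndepFun X P)
    (hXm : ∀ i, Measurable (X i)) {B : ∀ i, Set (β i)} (hB : ∀ i, MeasurableSet (B i)) :
    iIndepSet (fun i => X i ⁻¹' B i) P :=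
  (iIndepSet_iff_meas_biInter fun i => hXm i (hB i)).2 fun _ =>
    hX.meas_biInter fun i _ => ⟨B i, hB i, rfl⟩

theorem measureReal_setOf_le_eq_sum_Icc {Ω : Type*} [MeasurableSpace Ω] {P : Measure Ω}
    [IsFiniteMeasure P] {N : Ω → ℕ} (hN : Measurable N) {n : ℕ} (hNn : ∀ ω, N ω ≤ n) (i : ℕ) :
    P.real {ω | i ≤ N ω} = ∑ j ∈ Icc i n, P.real {ω | N ω = j} := by
  have hset : {ω | i ≤ N ω} = N ⁻¹' ↑(Icc i n) := by
    ext ω; simp [hNn ω]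
  rw [hset, ← sum_measureReal_preimage_singleton _ fun j _ => hN (measurableSet_singleton j)]
  rfl

namespace ProbabilityTheory

open scoped Classical

variable {Ω ι : Type*} [Fintype ι] {A : ι → Set Ω}

theorem setOf_filter_mem_eq_iInter (S : Finset ι) :
    {ω | ({idx | ω ∈ A idx} : Finset ι) = S} = ⋂ idx, if idx ∈ S then A idx else (A idx)ᶜ := by
  ext ω
  simp only [Set.mem_ofPred_eq, Set.mem_iInter, Finset.ext_iff, mem_filter, mem_univ, true_and]
  refine forall_congr' fun idx => ?_
  split_ifs with h <;> simp [h]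

variable [MeasurableSpace Ω] {P : Measure Ω}

theorem measurableSet_setOf_filter_mem_eq (hAm : ∀ idx, MeasurableSet (A idx)) (S : Finset ι) :
    MeasurableSet {ω | ({idx | ω ∈ A idx} : Finset ι) = S} := by
  rw [setOf_filter_mem_eq_iInter]
  refine .iInter fun idx => ?_
  split_ifs
  exacts [hAm idx, (hAm idx).compl]

theorem measurable_card_filter_mem (hAm : ∀ idx, MeasurableSet (A idx)) :
    Measurable fun ω => #{idx | ω ∈ A idx} := by
  simp_rw [card_filter]
  exact Finset.measurable_sum _ fun idx _ =>
    Measurable.ite (hAm idx) measurable_const measurable_const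

theorem iIndepSet.measureReal_filter_mem_eq (hAm : ∀ idx, MeasurableSet (A idx))
    (hA : iIndepSet A P) (S : Finset ι) :
    P.real {ω | ({idx | ω ∈ A idx} : Finset ι) = S}
      = ∏ idx, if idx ∈ S then P.real (A idx) else 1 - P.real (A idx) := by
  have := hA.isProbabilityMeasure
  rw [setOf_filter_mem_eq_iInter, measureReal_def, ((iIndepSet_iff_iIndep _ _).1 hA).meas_iInter,
    ENNReal.toReal_prod]
  · refine prod_congr rfl fun idx _ => ?_
    split_ifs
    · rfl
    · rw [← measureReal_def, measureReal_compl (hAm idx), probReal_univ]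
  · intro idx
    have hgen : MeasurableSet[MeasurableSpace.generateFrom {A idx}] (A idx) :=
      MeasurableSpace.measurableSet_generateFrom rfl
    split_ifs
    exacts [hgen, hgen.compl]

theorem iIndepSet.measureReal_card_filter_mem_eq (hAm : ∀ idx, MeasurableSet (A idx))
    (hA : iIndepSet A P) (j : ℕ) :
    P.real {ω | #{idx | ω ∈ A idx} = j}
      = (∏ idx, (C (1 - P.real (A idx)) + C (P.real (A idx)) * X)).coeff j := by
  have := hA.isProbabilityMeasure
  have hset : {ω | #{idx | ω ∈ A idx} = j}
      = (fun ω => ({idx | ω ∈ A idx} : Finset ι)) ⁻¹' ↑(powersetCard j (univ : Finset ι)) := by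
    ext ω; simp
  rw [hset, coeff_prod_C_add_C_mul_X,
    ← sum_measureReal_preimage_singleton _ fun S _ => measurableSet_setOf_filter_mem_eq hAm S]
  exact sum_congr rfl fun S _ => hA.measureReal_filter_mem_eq hAm S

end ProbabilityTheory

theorem orderStat_cdf_poly_general
    {Ω : Type*} [MeasurableSpace Ω] (P : Measure Ω) [IsProbabilityMeasure P]
    (F : ℝ → ℝ) (k m : ℕ)
    (Y : Fin k × Fin m → Ω → ℝ)
    (hmeas : ∀ i, Measurable (Y i))
    (hindep : iIndepFun Y P)
    (hcdf : ∀ (i : Fin k × Fin m) (y : ℝ),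
      (P {ω | Y i ω ≤ y}).toReal = IB ((i.1 : ℝ) + 1) ((k : ℝ) - (i.1 : ℝ)) (F y))
    (i : ℕ) (hi : 1 ≤ i) (hin : i ≤ m * k) (y : ℝ) :
    (P {ω | orderStat Y i ω ≤ y}).toReal
      = ∑ j ∈ Finset.Icc i (m * k),
          (∏ r : Fin k,
            (Polynomial.C (1 - IB ((r : ℝ) + 1) ((k : ℝ) - (r : ℝ)) (F y))
              + Polynomial.C (IB ((r : ℝ) + 1) ((k : ℝ) - (r : ℝ)) (F y)) * Polynomial.X) ^ m
          ).coeff j := by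
  classical
  set A : Fin k × Fin m → Set Ω := fun idx => {ω | Y idx ω ≤ y}
  have hAm : ∀ idx, MeasurableSet (A idx) := fun idx => hmeas idx measurableSet_Iic
  have hA : iIndepSet A P := hindep.iIndepSet_preimage hmeas fun _ => measurableSet_Iic
  have hcard : Fintype.card (Fin k × Fin m) = m * k := by simp [mul_comm]
  have hevent : {ω | orderStat Y i ω ≤ y} = {ω | i ≤ #{idx | ω ∈ A idx}} :=
    Set.ext fun ω => orderStat_le_iff Y hi (hcard ▸ hin) ω y
  have hpoly : ∏ r : Fin k,
      (C (1 - IB ((r : ℝ) + 1) ((k : ℝ) - (r : ℝ)) (F y))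
        + C (IB ((r : ℝ) + 1) ((k : ℝ) - (r : ℝ)) (F y)) * X) ^ m
      = ∏ idx, (C (1 - P.real (A idx)) + C (P.real (A idx)) * X) := by
    simp only [Fintype.prod_prod_type, Fin.prod_const, measureReal_def, A, hcdf]
  rw [← measureReal_def, hevent,
    measureReal_setOf_le_eq_sum_Icc (measurable_card_filter_mem hAm)
      (fun ω => hcard ▸ card_le_univ _), hpoly]
  exact sum_congr rfl fun j _ => hA.measureReal_card_filter_mem_eq hAm j

/-- Under perfect ranking with `F` continuous, setting `q_r(t) = IB_{r,k-r+1}(t)`,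
the CDF of the `i`-th pooled order statistic satisfies
`G_i(y) = P(Y*_(i) ≤ y) = ∑_{j=i}^n c_j(F y)`, where `c_j(t)` is the coefficient of
`z^j` in `P(z;t) = ∏_{r=1}^k ((1 - q_r(t)) + q_r(t) z)^m`. -/
theorem orderStat_cdf_poly
    {Ω : Type*} [MeasurableSpace Ω] (P : Measure Ω) [IsProbabilityMeasure P]
    (μ : Measure ℝ) [IsProbabilityMeasure μ] (F : ℝ → ℝ)
    (hF : ∀ y, F y = (μ (Set.Iic y)).toReal) (hFcont : Continuous F)
    (k m : ℕ) (hk : 1 ≤ k) (hm : 1 ≤ m)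
    (Y : Fin k × Fin m → Ω → ℝ)
    (hmeas : ∀ i, Measurable (Y i))
    (hindep : iIndepFun Y P)
    (hcdf : ∀ (i : Fin k × Fin m) (y : ℝ),
      (P {ω | Y i ω ≤ y}).toReal = IB ((i.1 : ℝ) + 1) ((k : ℝ) - (i.1 : ℝ)) (F y))
    (i : ℕ) (hi : 1 ≤ i) (hin : i ≤ m * k) (y : ℝ) :
    (P {ω | orderStat Y i ω ≤ y}).toReal
      = ∑ j ∈ Finset.Icc i (m * k),
          (∏ r : Fin k,
            (Polynomial.C (1 - IB ((r : ℝ) + 1) ((k : ℝ) - (r : ℝ)) (F y))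
              + Polynomial.C (IB ((r : ℝ) + 1) ((k : ℝ) - (r : ℝ)) (F y)) * Polynomial.X) ^ m
          ).coeff j :=
  orderStat_cdf_poly_general P F k m Y hmeas hindep hcdf i hi hin y
end

section
/- Suppose F has finite second moment, with mean μ = ∫ y dF(y) and variance σ² = ∫ (y − μ)² dF(y). Under perfect ranking, the RSS mean estimator μ̂_RSS = (1/n) ∑_{r=1}^k ∑_{j=1}^m Y_{r,j} is unbiased for μ, and Var(μ̂_RSS) = σ²/n − (1/(nk)) ∑_{r=1}^k (μ_{r:k} − μ)², where μ_{r:k} = E[Y_{r,1}] is the mean of the r-th perfect-ranking stratum distribution F_{(r)}. In particular Var(μ̂_RSS) ≤ σ²/n. -/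
open MeasureTheory ProbabilityTheory Filter

/-!
The `Beta(r, k - r + 1)` densities, `r = 1, …, k`, are `k` times the Bernstein basis polynomials
of degree `k - 1`, which sum to one; hence `∑_r IB_{r,k-r+1}(t) = k t`, so `∑_r F_{(r)} = k F`:
the population law is the average of the `k` stratum laws. Averaging `y` and `(y - μ)²` over the
strata gives `∑_r μ_{r:k} = k μ` and `∑_r (σ_r² + (μ_{r:k} - μ)²) = k σ²`, where `σ_r²` is the
variance of the `r`-th stratum, and by independence `Var(μ̂_RSS) = (m / n²) ∑_r σ_r²`.
-/

open scoped ENNReal Nat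

theorem integral_pow_mul_one_sub_pow (a b : ℕ) :
    ∫ u in (0:ℝ)..1, u ^ a * (1 - u) ^ b = a ! * b ! / (a + b + 1)! := by
  have h := Complex.Gamma_mul_Gamma_eq_betaIntegral (s := a + 1) (t := b + 1)
    (by simp only [Complex.add_re, Complex.natCast_re, Complex.one_re]; positivity)
    (by simp only [Complex.add_re, Complex.natCast_re, Complex.one_re]; positivity)
  have hB : Complex.betaIntegral (a + 1) (b + 1)
      = ↑(∫ u in (0:ℝ)..1, u ^ a * (1 - u) ^ b) := by
    rw [Complex.betaIntegral, ← intervalIntegral.integral_ofReal]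
    refine intervalIntegral.integral_congr fun u _ => ?_
    simp only [add_sub_cancel_right, Complex.cpow_natCast]
    push_cast
    rfl
  rw [hB, show (a : ℂ) + 1 + (b + 1) = ↑(a + b + 1 : ℕ) + 1 by push_cast; ring,
    Complex.Gamma_nat_eq_factorial, Complex.Gamma_nat_eq_factorial,
    Complex.Gamma_nat_eq_factorial] at h
  rw [eq_div_iff (by positivity)]
  exact_mod_cast (h.trans (mul_comm _ _)).symm

theorem IB_natCast_add_one (a b : ℕ) (t : ℝ) :
    IB (a + 1) (b + 1) t
      = (a + b + 1) * (a + b).choose a * ∫ u in (0:ℝ)..t, u ^ a * (1 - u) ^ b := by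
  simp only [IB, betaFun, add_sub_cancel_right, Real.rpow_natCast,
    integral_pow_mul_one_sub_pow]
  have hfact : ((a + b + 1)! : ℝ) = (a + b + 1) * (a + b).choose a * a ! * b ! := by
    rw [Nat.factorial_succ, Nat.choose_symm_add, ← Nat.add_choose_mul_factorial_mul_factorial]
    push_cast
    ring
  rw [hfact]
  field_simp

theorem sum_IB_eq_mul (k : ℕ) (t : ℝ) :
    ∑ r : Fin k, IB (r + 1) (k - r) t = k * t := by
  rcases k with _ | n
  · simp
  have hterm (r : Fin (n + 1)) : IB (r + 1) ((n + 1 : ℕ) - r) t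
      = (n + 1) * ∫ u in (0:ℝ)..t, u ^ (r : ℕ) * (1 - u) ^ (n - r) * n.choose r := by
    have hr : ((r : ℕ) : ℝ) + ((n - r : ℕ) : ℝ) = n := by
      rw [Nat.cast_sub (by omega)]
      ring
    rw [show ((n + 1 : ℕ) : ℝ) - r = ((n - r : ℕ) : ℝ) + 1 by push_cast [← hr]; ring,
      IB_natCast_add_one, hr, Nat.add_sub_cancel' (by omega), intervalIntegral.integral_mul_const]
    ring
  have hbinom (u : ℝ) :
      ∑ r : Fin (n + 1), u ^ (r : ℕ) * (1 - u) ^ (n - r) * n.choose r = 1 := by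
    rw [Fin.sum_univ_eq_sum_range (fun r => u ^ r * (1 - u) ^ (n - r) * (n.choose r : ℝ)),
      ← add_pow, add_sub_cancel, one_pow]
  simp_rw [hterm, ← Finset.mul_sum]
  rw [← intervalIntegral.integral_finsetSum fun r _ =>
    (by fun_prop : Continuous _).intervalIntegrable _ _]
  simp [hbinom]

theorem sum_measure_eq_smul_of_cdf_eq_IB {k : ℕ} (ρ : Fin k → Measure ℝ)
    [∀ r, IsFiniteMeasure (ρ r)] (ν : Measure ℝ) [IsFiniteMeasure ν]
    (hρ : ∀ r y, (ρ r (Set.Iic y)).toReal = IB (r + 1) (k - r) (ν (Set.Iic y)).toReal) :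
    ∑ r, ρ r = (k : ℝ≥0∞) • ν := by
  have := ν.smul_finite (ENNReal.natCast_ne_top k)
  refine Measure.ext_of_Iic _ _ fun y => ?_
  rw [← ENNReal.toReal_eq_toReal_iff' (measure_ne_top _ _) (measure_ne_top _ _),
    Measure.finsetSum_apply, ENNReal.toReal_sum fun r _ => measure_ne_top _ _]
  simp only [hρ, sum_IB_eq_mul, Measure.smul_apply, smul_eq_mul, ENNReal.toReal_mul,
    ENNReal.toReal_natCast]

theorem sum_integral_eq_toReal_mul_integral {α ι : Type*} [MeasurableSpace α] [Fintype ι]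
    {ρ : ι → Measure α} {ν : Measure α} {c : ℝ≥0∞} (h : ∑ i, ρ i = c • ν)
    {g : α → ℝ} (hg : ∀ i, Integrable g (ρ i)) :
    ∑ i, ∫ x, g x ∂ρ i = c.toReal * ∫ x, g x ∂ν := by
  rw [← integral_finsetSum_measure fun i _ => hg i, h, integral_smul_measure, smul_eq_mul]

theorem sum_integral_comp_eq_mul_integral_of_cdf_eq_IB {Ω : Type*} [MeasurableSpace Ω]
    {P : Measure Ω} [IsFiniteMeasure P] {ν : Measure ℝ} [IsFiniteMeasure ν] {k : ℕ}
    {X : Fin k → Ω → ℝ} (hX : ∀ r, AEMeasurable (X r) P)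
    (hcdf : ∀ r y, (P {ω | X r ω ≤ y}).toReal = IB (r + 1) (k - r) (ν (Set.Iic y)).toReal)
    {g : ℝ → ℝ} (hg : Measurable g) (hgX : ∀ r, Integrable (fun ω => g (X r ω)) P) :
    ∑ r, ∫ ω, g (X r ω) ∂P = k * ∫ y, g y ∂ν := by
  have hlaws : ∑ r, P.map (X r) = (k : ℝ≥0∞) • ν :=
    sum_measure_eq_smul_of_cdf_eq_IB _ _ fun r y => by
      rw [Measure.map_apply_of_aemeasurable (hX r) measurableSet_Iic]
      exact hcdf r y
  rw [← ENNReal.toReal_natCast, ← sum_integral_eq_toReal_mul_integral hlaws fun r =>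
    (integrable_map_measure hg.aestronglyMeasurable (hX r)).2 (hgX r)]
  exact Finset.sum_congr rfl fun r _ => (integral_map (hX r) hg.aestronglyMeasurable).symm

theorem sum_prod_integral_comp_eq_mul_integral_of_cdf_eq_IB {Ω : Type*} [MeasurableSpace Ω]
    {P : Measure Ω} [IsFiniteMeasure P] {ν : Measure ℝ} [IsFiniteMeasure ν] {k m : ℕ}
    {Y : Fin k × Fin m → Ω → ℝ} (hY : ∀ i, AEMeasurable (Y i) P)
    (hcdf : ∀ (i : Fin k × Fin m) y,
      (P {ω | Y i ω ≤ y}).toReal = IB (i.1 + 1) (k - i.1) (ν (Set.Iic y)).toReal)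
    {g : ℝ → ℝ} (hg : Measurable g) (hgY : ∀ i, Integrable (fun ω => g (Y i ω)) P) :
    ∑ i, ∫ ω, g (Y i ω) ∂P = m * k * ∫ y, g y ∂ν := by
  have hstrata (j : Fin m) : ∑ r, ∫ ω, g (Y (r, j) ω) ∂P = k * ∫ y, g y ∂ν :=
    sum_integral_comp_eq_mul_integral_of_cdf_eq_IB (fun r => hY _) (fun r => hcdf (r, j)) hg
      fun r => hgY _
  simp only [Fintype.sum_prod_type_right, hstrata, Finset.sum_const, Finset.card_univ,
    Fintype.card_fin, nsmul_eq_mul]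
  ring

theorem variance_eq_integral_sub_sq_sub_sq {Ω : Type*} [MeasurableSpace Ω] {P : Measure Ω}
    [IsProbabilityMeasure P] {X : Ω → ℝ} (hX : MemLp X 2 P) (c : ℝ) :
    variance X P = ∫ ω, (X ω - c) ^ 2 ∂P - (P[X] - c) ^ 2 := by
  rw [← variance_sub_const hX.aestronglyMeasurable c,
    variance_eq_sub (X := fun ω => X ω - c) (hX.sub (memLp_const c)),
    integral_sub (hX.integrable one_le_two) (integrable_const c)]
  simp

theorem variance_const_mul_sum_of_iIndepFun {Ω ι : Type*} [MeasurableSpace Ω] [Fintype ι]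
    {P : Measure Ω} {X : ι → Ω → ℝ} (hX : ∀ i, MemLp (X i) 2 P) (hindep : iIndepFun X P)
    (c : ℝ) : variance (fun ω => c * ∑ i, X i ω) P = c ^ 2 * ∑ i, variance (X i) P := by
  rw [variance_const_mul, ← Finset.sum_fn, IndepFun.variance_sum (fun i _ => hX i)
    fun i _ j _ hij => hindep.indepFun hij]

theorem rss_mean_unbiased_var_general
    {Ω : Type*} [MeasurableSpace Ω] (P : Measure Ω) [IsProbabilityMeasure P]
    (ν : Measure ℝ) [IsProbabilityMeasure ν] (F : ℝ → ℝ)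
    (hF : ∀ y, F y = (ν (Set.Iic y)).toReal)
    (k m : ℕ) (hk : 1 ≤ k) (hm : 1 ≤ m)
    (Y : Fin k × Fin m → Ω → ℝ)
    (hmem : ∀ i, MemLp (Y i) 2 P)
    (hindep : iIndepFun Y P)
    (hcdf : ∀ (i : Fin k × Fin m) (y : ℝ),
      (P {ω | Y i ω ≤ y}).toReal = IB ((i.1 : ℝ) + 1) ((k : ℝ) - (i.1 : ℝ)) (F y))
    (popMean popVar : ℝ)
    (hμ : popMean = ∫ y, y ∂ν)
    (hσ : popVar = ∫ y, (y - popMean) ^ 2 ∂ν)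
    (μr : Fin k → ℝ)
    (hμr : ∀ i : Fin k × Fin m, (∫ ω, Y i ω ∂P) = μr i.1) :
    (∫ ω, (((m * k : ℕ) : ℝ)⁻¹ * ∑ i : Fin k × Fin m, Y i ω) ∂P) = popMean ∧
    variance (fun ω => ((m * k : ℕ) : ℝ)⁻¹ * ∑ i : Fin k × Fin m, Y i ω) P
      = popVar / ((m * k : ℕ) : ℝ)
        - (1 / (((m * k : ℕ) : ℝ) * (k : ℝ))) * ∑ r : Fin k, (μr r - popMean) ^ 2 ∧
    variance (fun ω => ((m * k : ℕ) : ℝ)⁻¹ * ∑ i : Fin k × Fin m, Y i ω) P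
      ≤ popVar / ((m * k : ℕ) : ℝ) := by
  have hk0 : (k : ℝ) ≠ 0 := Nat.cast_ne_zero.2 (by omega)
  have hm0 : (m : ℝ) ≠ 0 := Nat.cast_ne_zero.2 (by omega)
  simp only [hF] at hcdf
  have hsum {g : ℝ → ℝ} (hg : Measurable g) :=
    sum_prod_integral_comp_eq_mul_integral_of_cdf_eq_IB (fun i => (hmem i).aemeasurable) hcdf hg
  have hsum_mean : ∑ i, ∫ ω, Y i ω ∂P = m * k * popMean :=
    hμ ▸ hsum (g := fun y => y) measurable_id' fun i => (hmem i).integrable one_le_two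
  have hsum_sq : ∑ i, ∫ ω, (Y i ω - popMean) ^ 2 ∂P = m * k * popVar :=
    hσ ▸ hsum (g := fun y => (y - popMean) ^ 2) (by fun_prop) fun i =>
      ((hmem i).sub (memLp_const popMean)).integrable_sq
  have hsum_var : ∑ i, variance (Y i) P = m * (k * popVar - ∑ r, (μr r - popMean) ^ 2) := by
    simp only [variance_eq_integral_sub_sq_sub_sq (hmem _) popMean, hμr, Finset.sum_sub_distrib,
      hsum_sq, Fintype.sum_prod_type_right, Finset.sum_const, Finset.card_univ, Fintype.card_fin,
      nsmul_eq_mul]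
    ring
  have hmean : ∫ ω, ((m * k : ℕ) : ℝ)⁻¹ * ∑ i, Y i ω ∂P = popMean := by
    rw [integral_const_mul, integral_finsetSum _ fun i _ => (hmem i).integrable one_le_two,
      hsum_mean]
    push_cast
    field_simp
  have hvar : variance (fun ω => ((m * k : ℕ) : ℝ)⁻¹ * ∑ i, Y i ω) P
      = popVar / ((m * k : ℕ) : ℝ)
        - (1 / (((m * k : ℕ) : ℝ) * (k : ℝ))) * ∑ r, (μr r - popMean) ^ 2 := by
    rw [variance_const_mul_sum_of_iIndepFun hmem hindep, hsum_var]
    push_cast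
    field_simp
  exact ⟨hmean, hvar, hvar ▸ sub_le_self _ (by positivity)⟩

/-- Under perfect ranking, if the population has finite second moment with mean
`μ` and variance `σ²`, the RSS mean estimator `μ̂_RSS = (1/n) ∑_{r,j} Y_{r,j}` is
unbiased for `μ` and
`Var(μ̂_RSS) = σ²/n - (1/(n k)) ∑_{r=1}^k (μ_{r:k} - μ)² ≤ σ²/n`,
where `μ_{r:k} = E[Y_{r,1}]` is the mean of the `r`-th stratum distribution. -/
theorem rss_mean_unbiased_var
    {Ω : Type*} [MeasurableSpace Ω] (P : Measure Ω) [IsProbabilityMeasure P]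
    (ν : Measure ℝ) [IsProbabilityMeasure ν] (F : ℝ → ℝ)
    (hF : ∀ y, F y = (ν (Set.Iic y)).toReal)
    (hL2 : Integrable (fun y : ℝ => y ^ 2) ν)
    (k m : ℕ) (hk : 1 ≤ k) (hm : 1 ≤ m)
    (Y : Fin k × Fin m → Ω → ℝ)
    (hmeas : ∀ i, Measurable (Y i))
    (hmem : ∀ i, MemLp (Y i) 2 P)
    (hindep : iIndepFun Y P)
    (hcdf : ∀ (i : Fin k × Fin m) (y : ℝ),
      (P {ω | Y i ω ≤ y}).toReal = IB ((i.1 : ℝ) + 1) ((k : ℝ) - (i.1 : ℝ)) (F y))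
    (popMean popVar : ℝ)
    (hμ : popMean = ∫ y, y ∂ν)
    (hσ : popVar = ∫ y, (y - popMean) ^ 2 ∂ν)
    (μr : Fin k → ℝ)
    (hμr : ∀ i : Fin k × Fin m, (∫ ω, Y i ω ∂P) = μr i.1) :
    (∫ ω, (((m * k : ℕ) : ℝ)⁻¹ * ∑ i : Fin k × Fin m, Y i ω) ∂P) = popMean ∧
    variance (fun ω => ((m * k : ℕ) : ℝ)⁻¹ * ∑ i : Fin k × Fin m, Y i ω) P
      = popVar / ((m * k : ℕ) : ℝ)
        - (1 / (((m * k : ℕ) : ℝ) * (k : ℝ))) * ∑ r : Fin k, (μr r - popMean) ^ 2 ∧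
    variance (fun ω => ((m * k : ℕ) : ℝ)⁻¹ * ∑ i : Fin k × Fin m, Y i ω) P
      ≤ popVar / ((m * k : ℕ) : ℝ) :=
  rss_mean_unbiased_var_general P ν F hF k m hk hm Y hmem hindep hcdf popMean popVar hμ hσ μr hμr
end
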